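/- arXiv:1711.07242 — 5 statements merged into one kernel-verified Lean document; each statement's English description precedes it below -/
import Mathlib

section
/- Let U be a family of maps u : [0,∞) → S closed under time translation (if u ∈ U and τ ≥ 0 then t ↦ u(t+τ) ∈ U) and under concatenation (if u, v ∈ U with v(0) = u(t̄) for some t̄ ≥ 0, then the map w with w(t) = u(t) for t ≤ t̄ and w(t) = v(t − t̄) for t > t̄ belongs to U). Suppose every u ∈ U satisfies: u(s) = u(t) implies u(r) = u(s) for all r ∈ [s,t]. Then U satisfies the ordering property: whenever u, v ∈ U with v([s,t]) ⊆ range(u), and v(l₁) = u(r₁), v(l₂) = u(r₂) with u(r₁) ≠ u(r₂) and r₁ < r₂ for l₁, l₂ ∈ [s,t], it follows that l₁ < l₂. -/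
/-!
If `v` passed through `u r₂` before `u r₁` although `r₁ < r₂`, follow `u` up to time `r₂` and
then continue along `v` from the time it was at `u r₂`. This concatenation lies in `U`, takes the
value `u r₁` at time `r₁` and again at a time after `r₂`, so by non-periodicity it is constant in
between; in particular `u r₂ = u r₁`.
-/

section
variable {S : Type*} {U : Set (ℝ → S)}

theorem concat_translate_mem
    (h1 : ∀ u ∈ U, ∀ τ : ℝ, 0 ≤ τ → (fun t => u (t + τ)) ∈ U)
    (h2 : ∀ u ∈ U, ∀ v ∈ U, ∀ tb : ℝ, 0 ≤ tb → v 0 = u tb →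
      (fun t => if t ≤ tb then u t else v (t - tb)) ∈ U)
    {u v : ℝ → S} (hu : u ∈ U) (hv : v ∈ U) {tb τ : ℝ} (htb : 0 ≤ tb) (hτ : 0 ≤ τ)
    (hvu : v τ = u tb) :
    (fun t => if t ≤ tb then u t else v (t - tb + τ)) ∈ U :=
  h2 u hu _ (h1 v hv τ hτ) tb htb (by simpa using hvu)

theorem eq_of_visit_order_reversed
    (h1 : ∀ u ∈ U, ∀ τ : ℝ, 0 ≤ τ → (fun t => u (t + τ)) ∈ U)
    (h2 : ∀ u ∈ U, ∀ v ∈ U, ∀ tb : ℝ, 0 ≤ tb → v 0 = u tb →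
      (fun t => if t ≤ tb then u t else v (t - tb)) ∈ U)
    (heq3 : ∀ u ∈ U, ∀ s t r : ℝ, 0 ≤ s → s ≤ r → r ≤ t → u s = u t → u r = u s)
    {u v : ℝ → S} (hu : u ∈ U) (hv : v ∈ U) {r₁ r₂ l₁ l₂ : ℝ} (hr₁ : 0 ≤ r₁) (hr : r₁ ≤ r₂)
    (hl₂ : 0 ≤ l₂) (hl : l₂ < l₁) (hv₁ : v l₁ = u r₁) (hv₂ : v l₂ = u r₂) :
    u r₂ = u r₁ := by
  let w : ℝ → S := fun t => if t ≤ r₂ then u t else v (t - r₂ + l₂)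
  have hw : w ∈ U := concat_translate_mem h1 h2 hu hv (hr₁.trans hr) hl₂ hv₂
  have hw_r₁ : w r₁ = u r₁ := if_pos hr
  have hw_r₂ : w r₂ = u r₂ := if_pos le_rfl
  have hw_return : w (r₂ + (l₁ - l₂)) = u r₁ := by
    rw [← hv₁]
    exact (if_neg (by linarith : ¬r₂ + (l₁ - l₂) ≤ r₂)).trans (congrArg v (by ring))
  have := heq3 w hw r₁ (r₂ + (l₁ - l₂)) r₂ hr₁ hr (by linarith) (hw_r₁.trans hw_return.symm)
  rwa [hw_r₂, hw_r₁] at this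

end

/-- Remark 3: if `U` is closed under time translation (H1) and concatenation
(H2), and every `u ∈ U` satisfies the non-periodicity property (eq. 3), then `U` satisfies
the ordering hypothesis (H3). -/
theorem ordering_of_translation_concat_nonperiodic {S : Type*}
    (U : Set (ℝ → S))
    (h1 : ∀ u ∈ U, ∀ τ : ℝ, 0 ≤ τ → (fun t => u (t + τ)) ∈ U)
    (h2 : ∀ u ∈ U, ∀ v ∈ U, ∀ tb : ℝ, 0 ≤ tb → v 0 = u tb →
      (fun t => if t ≤ tb then u t else v (t - tb)) ∈ U)
    (heq3 : ∀ u ∈ U, ∀ s t r : ℝ, 0 ≤ s → s ≤ r → r ≤ t → u s = u t → u r = u s) :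
    ∀ u ∈ U, ∀ v ∈ U, ∀ s t : ℝ, 0 ≤ s → s < t →
      v '' Set.Icc s t ⊆ u '' Set.Ici 0 →
      ∀ l₁ ∈ Set.Icc s t, ∀ l₂ ∈ Set.Icc s t, ∀ r₁ r₂ : ℝ, 0 ≤ r₁ → 0 ≤ r₂ →
        v l₁ = u r₁ → v l₂ = u r₂ → u r₁ ≠ u r₂ → r₁ < r₂ → l₁ < l₂ := by
  intro u hu v hv s t hs _ _ l₁ _ l₂ hl₂ r₁ r₂ hr₁ _ hv₁ hv₂ hne hr
  refine lt_of_not_ge fun hl => ?_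
  rcases hl.eq_or_lt with heq | hlt
  · exact hne (by rw [← hv₁, ← hv₂, heq])
  · exact hne (eq_of_visit_order_reversed h1 h2 heq3 hu hv hr₁ hr.le (hs.trans hl₂.1) hlt
      hv₁ hv₂).symm
end

section
/- Let U be a family of maps u : [0,∞) → S satisfying the ordering hypothesis (H3): whenever u, v ∈ U with v([s,t]) ⊆ range(u) for some t > s ≥ 0, and v(l₁) = u(r₁), v(l₂) = u(r₂) with u(r₁) ≠ u(r₂) and r₁ < r₂ for l₁, l₂ ∈ [s,t], then l₁ < l₂. Then every u ∈ U satisfies: for all 0 ≤ s < t < ∞, u(s) = u(t) if and only if u(r) = u(s) for all r ∈ [s,t]. -/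
/-- if `U` satisfies the ordering hypothesis (H3), then every `u ∈ U` satisfies
the non-periodicity property (eq. 3): for `0 ≤ s < t`, `u s = u t` iff `u` is constant on
`[s,t]`. -/
theorem nonperiodic_of_ordering {S : Type*}
    (U : Set (ℝ → S))
    (h3 : ∀ u ∈ U, ∀ v ∈ U, ∀ s t : ℝ, 0 ≤ s → s < t →
      v '' Set.Icc s t ⊆ u '' Set.Ici 0 →
      ∀ l₁ ∈ Set.Icc s t, ∀ l₂ ∈ Set.Icc s t, ∀ r₁ r₂ : ℝ, 0 ≤ r₁ → 0 ≤ r₂ →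
        v l₁ = u r₁ → v l₂ = u r₂ → u r₁ ≠ u r₂ → r₁ < r₂ → l₁ < l₂) :
    ∀ u ∈ U, ∀ s t : ℝ, 0 ≤ s → s < t →
      (u s = u t ↔ ∀ r ∈ Set.Icc s t, u r = u s) := by
  intro u hu s t hs hst
  refine ⟨fun hst_eq r hr => ?_, fun hconst => (hconst t ⟨hst.le, le_rfl⟩).symm⟩
  by_contra hne
  have hrange : u '' Set.Icc s t ⊆ u '' Set.Ici 0 := Set.image_mono fun x hx => hs.trans hx.1
  have hrt : r < t := hr.2.lt_of_ne fun hr_eq => hne (hr_eq ▸ hst_eq.symm)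
  -- (H3) with `v = u`: the value `u r ≠ u t = u s` is taken at `r < t`, so it must come before `s`.
  have hrs : r < s := h3 u hu u hu s t hs hst hrange r hr s ⟨le_rfl, hst.le⟩ r t
    (hs.trans hr.1) (hs.trans hst.le) rfl hst_eq (fun h => hne (h.trans hst_eq.symm)) hrt
  exact hrs.not_ge hr.1
end

section
/- Let U be a generalized Λ-semiflow on a Hausdorff space S. If y, ỹ ∈ U have the same range, then for w⋆ ∈ S: there exist tₙ → ∞ with y(tₙ) → w⋆ if and only if there exist sₙ → ∞ with ỹ(sₙ) → w⋆. In other words, the set closure-range(y) depends only on the range of y. -/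
open Filter Set

variable {S : Type*} [TopologicalSpace S]

/-- Increasing 1-Lipschitz reparametrization map `z : [0,∞) → [0,∞)` with `z 0 = 0`. -/
def IncLip1 (z : ℝ → ℝ) : Prop :=
  z 0 = 0 ∧ (∀ t : ℝ, 0 ≤ t → 0 ≤ z t) ∧
    ∀ s t : ℝ, 0 ≤ s → s ≤ t → 0 ≤ z t - z s ∧ z t - z s ≤ t - s

/-- The range `u([0,∞))` of a curve. -/
def rng {S : Type*} (u : ℝ → S) : Set S := u '' Set.Ici 0

/-- `range(u)` together with all limits along sequences of times tending to `∞`. -/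
def clrng (u : ℝ → S) : Set S :=
  rng u ∪ {w : S | ∃ tn : ℕ → ℝ, Tendsto tn atTop atTop ∧
    Tendsto (fun n => u (tn n)) atTop (nhds w)}

/-- The partial order `u ≻ v`. -/
def Prec (u v : ℝ → S) : Prop :=
  rng v ⊆ clrng u ∧ ∃ z : ℝ → ℝ, IncLip1 z ∧ ∀ t : ℝ, 0 ≤ t → u t = v (z t)

/-- A generalized Λ-semiflow on `S` (Definition of the paper, hypotheses (H1)–(H5)). -/
structure GLSemiflow (S : Type*) [TopologicalSpace S] where
  sols : Set (ℝ → S)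
  nonempty : sols.Nonempty
  /-- (H1) time translates of solutions are solutions -/
  h1 : ∀ u ∈ sols, ∀ τ : ℝ, 0 ≤ τ → (fun t => u (t + τ)) ∈ sols
  /-- (H2) concatenations of solutions are solutions -/
  h2 : ∀ u ∈ sols, ∀ v ∈ sols, ∀ tb : ℝ, 0 ≤ tb → v 0 = u tb →
    (fun t => if t ≤ tb then u t else v (t - tb)) ∈ sols
  /-- (H3) there is only one direction through the range of a solution -/
  h3 : ∀ u ∈ sols, ∀ v ∈ sols, ∀ s t : ℝ, 0 ≤ s → s < t →
    v '' Set.Icc s t ⊆ rng u →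
    ∀ l₁ ∈ Set.Icc s t, ∀ l₂ ∈ Set.Icc s t, ∀ r₁ r₂ : ℝ, 0 ≤ r₁ → 0 ≤ r₂ →
      v l₁ = u r₁ → v l₂ = u r₂ → u r₁ ≠ u r₂ → r₁ < r₂ → l₁ < l₂
  /-- (H4) extension property -/
  h4 : ∀ u ∈ sols, ∀ w : ℝ → S, ∀ θ : ℝ, 0 < θ →
    (∀ T : ℝ, 0 ≤ T → T < θ → ∃ wT ∈ sols, ∀ t : ℝ, 0 ≤ t → t ≤ T → wT t = w t) →
    w '' Set.Ico 0 θ = rng u →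
    ∃ ws : S, Tendsto u atTop (nhds ws) ∧
      (fun t => if t < θ then w t else ws) ∈ sols
  /-- (H5) locality -/
  h5 : ∀ w : ℝ → S,
    (∀ T : ℝ, 0 < T → ∃ u ∈ sols, ∀ t : ℝ, 0 ≤ t → t ≤ T → u t = w t) → w ∈ sols

/-- `T⋆(u) = inf { s ≥ 0 : u(t) = u(s) for all t ≥ s } ∈ [0,∞]`. -/
noncomputable def Tstar {S : Type*} (u : ℝ → S) : ENNReal :=
  sInf (ENNReal.ofReal '' {s : ℝ | 0 ≤ s ∧ ∀ t : ℝ, s ≤ t → u t = u s})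

/-- A minimal solution: `u ≻ v` implies `u = v` (as maps on `[0,∞)`). -/
def IsMinimalSol (U : Set (ℝ → S)) (u : ℝ → S) : Prop :=
  u ∈ U ∧ ∀ v ∈ U, Prec u v → ∀ t : ℝ, 0 ≤ t → u t = v t

/-- Membership in `U[range y]`. -/
def MemURange (U : Set (ℝ → S)) (y w : ℝ → S) : Prop :=
  w ∈ U ∧ rng y ⊆ rng w ∧ rng w ⊆ clrng y ∧
    ∃ θ : ENNReal, 0 < θ ∧
      w '' {t : ℝ | 0 ≤ t ∧ ENNReal.ofReal t < θ} = rng y ∧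
      w '' {t : ℝ | 0 ≤ t ∧ θ ≤ ENNReal.ofReal t} ⊆ clrng y \ rng y

namespace GLSemiflow

variable (F : GLSemiflow S) {u v y ty : ℝ → S}

theorem lt_of_rng_subset (hu : u ∈ F.sols) (hv : v ∈ F.sols) (hvu : rng v ⊆ rng u)
    {l₁ l₂ r₁ r₂ : ℝ} (hl₁ : 0 ≤ l₁) (hl₂ : 0 ≤ l₂) (hr₁ : 0 ≤ r₁) (hr₂ : 0 ≤ r₂)
    (h₁ : v l₁ = u r₁) (h₂ : v l₂ = u r₂) (hne : u r₁ ≠ u r₂) (hr : r₁ < r₂) : l₁ < l₂ :=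
  F.h3 u hu v hv 0 (max l₁ l₂ + 1) le_rfl (by positivity)
    ((image_mono fun _ ht => ht.1).trans hvu)
    l₁ ⟨hl₁, by linarith [le_max_left l₁ l₂]⟩ l₂ ⟨hl₂, by linarith [le_max_right l₁ l₂]⟩
    r₁ r₂ hr₁ hr₂ h₁ h₂ hne hr

/-- Late values of `y` are late values of `ty`: pick `r > M` and a time `l` with
`ty r = y l`; a value `y t = ty s` with `t > l` and `s ≤ M < r` would contradict (H3). -/
theorem eventually_mem_image_Ioi (hy : y ∈ F.sols) (hty : ty ∈ F.sols) (hr : rng y = rng ty)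
    (M : ℝ) : ∀ᶠ t in atTop, y t ∈ ty '' Ioi M := by
  set r := max M 0 + 1
  have hMr : M < r := by linarith [le_max_left M 0]
  have hr0 : 0 ≤ r := by positivity
  obtain ⟨l, hl0, hl⟩ : ty r ∈ rng y := hr ▸ ⟨r, hr0, rfl⟩
  filter_upwards [eventually_gt_atTop (max l 0)] with t ht
  have ht0 : 0 ≤ t := (le_max_right l 0).trans ht.le
  obtain ⟨s, hs0, hs⟩ : y t ∈ rng ty := hr ▸ ⟨t, ht0, rfl⟩
  by_cases hsM : M < s
  · exact ⟨s, hsM, hs⟩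
  by_cases hsr : ty s = ty r
  · exact ⟨r, hMr, hsr ▸ hs⟩
  have hlt : t < l := F.lt_of_rng_subset hty hy hr.le ht0 hl0 hs0 hr0 hs.symm hl hsr
    (by linarith [not_lt.mp hsM])
  exact absurd hlt (not_lt.mpr ((le_max_left l 0).trans ht.le))

end GLSemiflow

theorem exists_seq_tendsto_of_eventually_mem_image {f g : ℝ → S}
    (hfg : ∀ M : ℝ, ∀ᶠ t in atTop, f t ∈ g '' Ioi M) {w : S}
    (hf : ∃ tn : ℕ → ℝ, Tendsto tn atTop atTop ∧ Tendsto (fun n => f (tn n)) atTop (nhds w)) :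
    ∃ sn : ℕ → ℝ, Tendsto sn atTop atTop ∧ Tendsto (fun n => g (sn n)) atTop (nhds w) := by
  obtain ⟨tn, htn, hftn⟩ := hf
  choose nk hnk hmem using fun k : ℕ =>
    ((eventually_ge_atTop k).and (htn.eventually (hfg k))).exists
  choose sk hsk hgsk using hmem
  refine ⟨sk, tendsto_atTop_mono (fun k => (hsk k).le) tendsto_natCast_atTop_atTop, ?_⟩
  simp only [hgsk]
  exact hftn.comp (tendsto_atTop_mono hnk tendsto_id)

/-- the set `closure-range(y)` depends only on the range of `y`: for solutions
`y, ỹ` with equal ranges, `w⋆` is a limit along times `→ ∞` of `y` iff it is one of `ỹ`. -/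
theorem clrng_depends_only_on_range (F : GLSemiflow S) (y ty : ℝ → S)
    (hy : y ∈ F.sols) (hty : ty ∈ F.sols) (hr : rng y = rng ty) (ws : S) :
    (∃ tn : ℕ → ℝ, Tendsto tn atTop atTop ∧ Tendsto (fun n => y (tn n)) atTop (nhds ws)) ↔
      (∃ sn : ℕ → ℝ, Tendsto sn atTop atTop ∧ Tendsto (fun n => ty (sn n)) atTop (nhds ws)) :=
  ⟨exists_seq_tendsto_of_eventually_mem_image (F.eventually_mem_image_Ioi hy hty hr),
    exists_seq_tendsto_of_eventually_mem_image (F.eventually_mem_image_Ioi hty hy hr.symm)⟩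
end

section
/- Let U be a generalized Λ-semiflow on a Hausdorff space S. Every minimal solution u ∈ U is injective on [0, T⋆(u)), where T⋆(u) := inf { s ≥ 0 : u(t) = u(s) for all t ≥ s }. -/
open Filter Set

variable {S : Type*} [TopologicalSpace S]

noncomputable def cutOut {α : Type*} (u : ℝ → α) (s t : ℝ) : ℝ → α :=
  fun r => if r ≤ s then u r else u (r - s + t)

noncomputable def collapse (s t : ℝ) : ℝ → ℝ :=
  fun r => if r ≤ s then r else if r ≤ t then s else r - (t - s)

lemma incLip1_collapse {s t : ℝ} (hs : 0 ≤ s) (hst : s ≤ t) : IncLip1 (collapse s t) := by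
  refine ⟨if_pos hs, fun r hr => ?_, fun a b _ hab => ?_⟩
  · simp only [collapse]
    split_ifs <;> linarith
  · simp only [collapse]
    split_ifs <;> constructor <;> linarith

lemma cutOut_collapse {α : Type*} {u : ℝ → α} {s t : ℝ}
    (hconst : ∀ r ∈ Icc s t, u r = u s) (r : ℝ) : u r = cutOut u s t (collapse s t r) := by
  simp only [cutOut, collapse]
  split_ifs with h₁ h₂ h₃
  · rfl
  · exact hconst r ⟨le_of_not_ge h₁, h₂⟩
  · exact absurd le_rfl h₃
  · linarith
  · congr 1
    ring

lemma cutOut_of_le {α : Type*} {u : ℝ → α} {s t r : ℝ} (heq : u s = u t) (hr : s ≤ r) :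
    cutOut u s t r = u (r + (t - s)) := by
  simp only [cutOut]
  split_ifs with h
  · obtain rfl : r = s := le_antisymm h hr
    simpa using heq
  · congr 1
    ring

lemma rng_cutOut_subset {α : Type*} (u : ℝ → α) {s t : ℝ} (hst : s ≤ t) :
    rng (cutOut u s t) ⊆ rng u := by
  rintro _ ⟨r, hr, rfl⟩
  simp only [cutOut]
  split_ifs with h
  · exact mem_image_of_mem u hr
  · exact mem_image_of_mem u (show 0 ≤ r - s + t by linarith [mem_Ici.mp hr])

lemma prec_cutOut {u : ℝ → S} {s t : ℝ} (hs : 0 ≤ s) (hst : s ≤ t)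
    (hconst : ∀ r ∈ Icc s t, u r = u s) : Prec u (cutOut u s t) :=
  ⟨(rng_cutOut_subset u hst).trans subset_union_left,
    collapse s t, incLip1_collapse hs hst, fun r _ => cutOut_collapse hconst r⟩

lemma Tstar_le_ofReal {α : Type*} {u : ℝ → α} {s : ℝ} (hs : 0 ≤ s)
    (hconst : ∀ r, s ≤ r → u r = u s) : Tstar u ≤ ENNReal.ofReal s :=
  sInf_le ⟨s, ⟨hs, hconst⟩, rfl⟩

lemma eq_of_shift_invariant_of_const_on_Icc {α : Type*} {f : ℝ → α} {s d : ℝ} (hd : 0 < d)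
    (hshift : ∀ r, s ≤ r → f (r + d) = f r) (hconst : ∀ r ∈ Icc s (s + d), f r = f s)
    (r : ℝ) (hr : s ≤ r) : f r = f s := by
  set n := ⌊(r - s) / d⌋₊
  have hn_le : n * d ≤ r - s := (le_div_iff₀ hd).mp (Nat.floor_le (div_nonneg (by linarith) hd.le))
  have hn_lt : r - s < (n + 1) * d := (div_lt_iff₀ hd).mp (Nat.lt_floor_add_one _)
  have hρ : r - n * d ∈ Icc s (s + d) := ⟨by linarith, by linarith⟩
  have hiter : ∀ k : ℕ, f (r - n * d + k * d) = f (r - n * d) := by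
    intro k
    induction k with
    | zero => simp
    | succ k ih =>
      have hk : s ≤ r - n * d + k * d := by nlinarith [hρ.1, (k.cast_nonneg : (0 : ℝ) ≤ k)]
      rw [Nat.cast_succ, add_one_mul, ← add_assoc, hshift _ hk, ih]
  calc f r = f (r - n * d + n * d) := by rw [sub_add_cancel]
    _ = f s := by rw [hiter, hconst _ hρ]

namespace GLSemiflow

variable (F : GLSemiflow S)

lemma eq_of_mem_Icc_of_eq {u : ℝ → S} (hu : u ∈ F.sols) {s t : ℝ} (hs : 0 ≤ s) (hst : s < t)
    (heq : u s = u t) : ∀ r ∈ Icc s t, u r = u s := by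
  intro r hr
  by_contra hne
  have himg : u '' Icc s t ⊆ rng u := image_mono fun l hl => le_trans hs hl.1
  have hsr : s < r := lt_of_le_of_ne hr.1 fun h => hne (h ▸ rfl)
  -- (H3) with `v = u`: `u s` is reached before `u r`, so its visit at time `t` must precede `r`.
  exact absurd (F.h3 u hu u hu s t hs hst himg t ⟨hst.le, le_rfl⟩ r hr s r hs
    (hs.trans hr.1) heq.symm rfl (Ne.symm hne) hsr) (not_lt.mpr hr.2)

lemma cutOut_mem {u : ℝ → S} (hu : u ∈ F.sols) {s t : ℝ} (hs : 0 ≤ s) (hst : s ≤ t)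
    (heq : u s = u t) : cutOut u s t ∈ F.sols :=
  F.h2 u hu _ (F.h1 u hu t (hs.trans hst)) s hs (by simpa using heq.symm)

/-- Cutting the loop `[s, t]` out of `u` gives a solution below `u`, so by minimality `u` is
`(t - s)`-periodic after `s`; being constant on `[s, t]`, it is then constant after `s`. -/
lemma Tstar_le_of_eq {u : ℝ → S} (hu : IsMinimalSol F.sols u) {s t : ℝ} (hs : 0 ≤ s)
    (hst : s < t) (heq : u s = u t) : Tstar u ≤ ENNReal.ofReal s := by
  have hconst := F.eq_of_mem_Icc_of_eq hu.1 hs hst heq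
  have hmin := hu.2 _ (F.cutOut_mem hu.1 hs hst.le heq) (prec_cutOut hs hst.le hconst)
  have hshift : ∀ r, s ≤ r → u (r + (t - s)) = u r := fun r hr =>
    (cutOut_of_le heq hr).symm.trans (hmin r (hs.trans hr)).symm
  refine Tstar_le_ofReal hs (eq_of_shift_invariant_of_const_on_Icc (sub_pos.mpr hst) hshift ?_)
  simpa only [add_sub_cancel] using hconst

end GLSemiflow

/-- every minimal solution of a generalized Λ-semiflow is injective on
`[0, T⋆(u))`. -/
theorem minimal_injective_before_Tstar (F : GLSemiflow S) (u : ℝ → S)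
    (hu : IsMinimalSol F.sols u) :
    ∀ s t : ℝ, 0 ≤ s → 0 ≤ t →
      ENNReal.ofReal s < Tstar u → ENNReal.ofReal t < Tstar u → u s = u t → s = t := by
  intro s t hs ht hsT htT heq
  rcases lt_trichotomy s t with h | h | h
  · exact absurd (F.Tstar_le_of_eq hu hs h heq) (not_le.mpr hsT)
  · exact h
  · exact absurd (F.Tstar_le_of_eq hu ht h heq.symm) (not_le.mpr htT)
end

section
/- Let U be a generalized Λ-semiflow on a Hausdorff space S. If u is a minimal solution and τ ≥ 0, then the time translate u^τ(t) := u(t + τ) is also a minimal solution. -/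
open Filter Set

variable {S : Type*} [TopologicalSpace S]

/-!
Let `u(· + τ) ≻ v`. Gluing `u|[0,τ]` to `v` gives a solution `w` by (H2), and gluing the identity
on `[0,τ]` to the time change `z(· - τ) + τ` shows `u ≻ w`. Minimality of `u` forces `u = w`,
so `u(t + τ) = w(t + τ) = v(t)`.
-/

/-- The concatenation appearing in (H2). -/
noncomputable def concatAt {α : Type*} (u v : ℝ → α) (τ : ℝ) : ℝ → α :=
  fun t => if t ≤ τ then u t else v (t - τ)

section Concat

variable {α : Type*} {u v : ℝ → α} {τ : ℝ}

lemma concatAt_of_le {t : ℝ} (ht : t ≤ τ) : concatAt u v τ t = u t := if_pos ht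

lemma concatAt_of_lt {t : ℝ} (ht : τ < t) : concatAt u v τ t = v (t - τ) := if_neg ht.not_ge

lemma concatAt_add (hv : v 0 = u τ) {s : ℝ} (hs : 0 ≤ s) : concatAt u v τ (s + τ) = v s := by
  rcases hs.eq_or_lt with rfl | hs
  · rw [zero_add, concatAt_of_le le_rfl, hv]
  · rw [concatAt_of_lt (lt_add_of_pos_left τ hs), add_sub_cancel_right]

lemma rng_concatAt_subset : rng (concatAt u v τ) ⊆ rng u ∪ rng v := by
  rintro _ ⟨t, ht, rfl⟩
  rcases le_or_gt t τ with htτ | htτ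
  · exact Or.inl ⟨t, ht, (concatAt_of_le htτ).symm⟩
  · exact Or.inr ⟨t - τ, sub_nonneg.2 htτ.le, (concatAt_of_lt htτ).symm⟩

end Concat

lemma IncLip1.concatAt {z : ℝ → ℝ} (hz : IncLip1 z) {τ : ℝ} (hτ : 0 ≤ τ) :
    IncLip1 (concatAt id (fun s => z s + τ) τ) := by
  obtain ⟨hz0, hznn, hzlip⟩ := hz
  refine ⟨concatAt_of_le hτ, fun t ht => ?_, fun s t hs hst => ?_⟩
  · rcases le_or_gt t τ with h | h
    · rwa [concatAt_of_le h]
    · rw [concatAt_of_lt h]; linarith [hznn (t - τ) (by linarith)]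
  · rcases le_or_gt t τ with ht | ht
    · rw [concatAt_of_le ht, concatAt_of_le (hst.trans ht)]
      simp only [id, sub_nonneg, le_refl, and_true, hst]
    rw [concatAt_of_lt ht]
    rcases le_or_gt s τ with hsτ | hsτ
    · have := hzlip 0 (t - τ) le_rfl (by linarith)
      rw [concatAt_of_le hsτ, id]
      constructor <;> linarith
    · have := hzlip (s - τ) (t - τ) (by linarith) (by linarith)
      rw [concatAt_of_lt hsτ]
      constructor <;> linarith

lemma clrng_translate_subset (u : ℝ → S) {τ : ℝ} (hτ : 0 ≤ τ) :
    clrng (fun t => u (t + τ)) ⊆ clrng u := by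
  rintro x (⟨s, hs, rfl⟩ | ⟨tn, htn, hlim⟩)
  · exact Or.inl ⟨s + τ, add_nonneg hs hτ, rfl⟩
  · exact Or.inr ⟨fun n => tn n + τ, tendsto_atTop_add_const_right atTop τ htn, hlim⟩

lemma Prec.apply_zero_eq {u v : ℝ → S} (h : Prec u v) : v 0 = u 0 := by
  obtain ⟨-, z, hz, huv⟩ := h
  rw [huv 0 le_rfl, hz.1]

lemma Prec.concatAt_of_translate {u v : ℝ → S} {τ : ℝ} (hτ : 0 ≤ τ)
    (h : Prec (fun t => u (t + τ)) v) : Prec u (concatAt u v τ) := by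
  have hv0 : v 0 = u τ := by simpa using h.apply_zero_eq
  obtain ⟨hrng, z, hz, hvz⟩ := h
  refine ⟨fun x hx => ?_, _, hz.concatAt hτ, fun t ht => ?_⟩
  · rcases rng_concatAt_subset hx with hx | hx
    · exact Or.inl hx
    · exact clrng_translate_subset u hτ (hrng hx)
  · rcases le_or_gt t τ with htτ | htτ
    · rw [concatAt_of_le htτ, id, concatAt_of_le htτ]
    · have hs : 0 ≤ t - τ := sub_nonneg.2 htτ.le
      rw [concatAt_of_lt htτ, concatAt_add hv0 (hz.2.1 _ hs), ← hvz _ hs]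
      exact congrArg u (sub_add_cancel t τ).symm

/-- time translates of minimal solutions are minimal solutions. -/
theorem minimal_translate (F : GLSemiflow S) (u : ℝ → S)
    (hu : IsMinimalSol F.sols u) (τ : ℝ) (hτ : 0 ≤ τ) :
    IsMinimalSol F.sols (fun t => u (t + τ)) := by
  obtain ⟨huS, humin⟩ := hu
  refine ⟨F.h1 u huS τ hτ, fun v hv hprec t ht => ?_⟩
  have hv0 : v 0 = u τ := by simpa using hprec.apply_zero_eq
  have hw : concatAt u v τ ∈ F.sols := F.h2 u huS v hv τ hτ hv0
  calc u (t + τ) = concatAt u v τ (t + τ) :=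
        humin _ hw (hprec.concatAt_of_translate hτ) _ (by linarith)
    _ = v t := concatAt_add hv0 ht
end
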